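/- arXiv:1608.01803 — 2 statements merged into one kernel-verified Lean document; each statement's English description precedes it below -/
import Mathlib

section
/- Let μ₀ = μ₁ + μ₂ with μ₀ ≥ μ₁ both having compact infinite supports, and write γ_n(μ₁)/γ_n(μ₀) = 1 + β_n. Then β_n ≥ 0 and (1 − ‖p_n(μ₀,·)‖²_{L²(μ₂)})^{−1/2} − 1 ≤ β_n ≤ (1 + ‖p_n(μ₁,·)‖²_{L²(μ₂)})^{1/2} − 1. -/
/-!
Embed polynomials into `L²(μ)`. Because `p_n(μ)` is orthogonal to all polynomials of degree
`< n`, a polynomial `q` of degree `≤ n` satisfies `⟨q, p_n(μ)⟩_μ = q_n / γ_n(μ)`, where `q_n` is its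
`n`-th coefficient. Hence `⟨p_n(μ₁), p_n(μ₀)⟩_{μ₀} = 1 + β_n` and
`⟨p_n(μ₀), p_n(μ₁)⟩_{μ₁} = (1 + β_n)⁻¹`, and Cauchy–Schwarz against the unit vectors `p_n(μ_j)`
gives `(1 + β_n)² ≤ ‖p_n(μ₁)‖²_{μ₀} = 1 + ‖p_n(μ₁)‖²_{μ₂}` and
`(1 + β_n)⁻² ≤ ‖p_n(μ₀)‖²_{μ₁} = 1 - ‖p_n(μ₀)‖²_{μ₂} ≤ 1`.
-/

open MeasureTheory Polynomial Filter

noncomputable section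

/-- The (closed) support of a Borel measure on `ℂ`. -/
def msupp (μ : Measure ℂ) : Set ℂ := {z | ∀ U ∈ nhds z, μ U ≠ 0}

/-- `p` is the sequence of orthonormal polynomials for `μ`:
`p n` has degree `n`, positive (real) leading coefficient, and
`⟪p m, p n⟫_μ = δ_{m n}`. -/
def ONP (μ : Measure ℂ) (p : ℕ → Polynomial ℂ) : Prop :=
  (∀ n, (p n).natDegree = n) ∧
  (∀ n, 0 < ((p n).leadingCoeff).re ∧ ((p n).leadingCoeff).im = 0) ∧
  (∀ m n, ∫ z, (p m).eval z * (starRingEnd ℂ) ((p n).eval z) ∂μ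
      = if m = n then 1 else 0)

/-- The `n`-th Christoffel function of the measure `μ` at the point `z`. -/
def christoffel (μ : Measure ℂ) (n : ℕ) (z : ℂ) : ℝ :=
  sInf {r : ℝ | ∃ P : Polynomial ℂ, P.natDegree ≤ n ∧ P.eval z = 1 ∧
      r = ∫ t, ‖P.eval t‖ ^ 2 ∂μ}

open scoped ComplexConjugate InnerProductSpace

theorem ae_mem_msupp (μ : Measure ℂ) : ∀ᵐ z ∂μ, z ∈ msupp μ := by
  refine measure_null_of_locally_null _ fun z hz => ?_
  simp only [msupp, Set.mem_compl_iff, Set.mem_ofPred_eq, not_forall, not_not] at hz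
  obtain ⟨U, hU, hU0⟩ := hz
  exact ⟨U, mem_nhdsWithin_of_mem_nhds hU, hU0⟩

theorem memLp_of_isCompact_msupp {E : Type*} [NormedAddCommGroup E] {μ : Measure ℂ}
    [IsFiniteMeasure μ] (hμ : IsCompact (msupp μ)) {f : ℂ → E} (hf : Continuous f)
    (q : ENNReal) : MemLp f q μ := by
  obtain ⟨C, hC⟩ := hμ.exists_bound_of_continuousOn hf.continuousOn
  exact MemLp.of_bound hf.aestronglyMeasurable C <|
    (ae_mem_msupp μ).mono fun z hz => hC z hz

theorem integral_norm_sq_add_measure {α E : Type*} [MeasurableSpace α] [NormedAddCommGroup E]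
    {μ ν : Measure α} {f : α → E} (hf : MemLp f 2 (μ + ν)) :
    ∫ x, ‖f x‖ ^ 2 ∂(μ + ν) = ∫ x, ‖f x‖ ^ 2 ∂μ + ∫ x, ‖f x‖ ^ 2 ∂ν :=
  integral_add_measure (hf.left_of_add_measure.integrable_norm_pow two_ne_zero)
    (hf.right_of_add_measure.integrable_norm_pow two_ne_zero)

theorem inv_sqrt_le_of_inv_sq_le {t a : ℝ} (ht : 0 < t) (h : t⁻¹ ^ 2 ≤ a) : (√a)⁻¹ ≤ t := by
  have ha : 0 < a := (pow_pos (inv_pos.mpr ht) 2).trans_le h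
  rw [inv_le_comm₀ (Real.sqrt_pos.mpr ha) ht]
  exact Real.le_sqrt_of_sq_le h

namespace Polynomial

theorem degree_sub_C_mul_lt {K : Type*} [Field K] {q r : K[X]} {n : ℕ}
    (hq : q.natDegree ≤ n) (hr : r.natDegree = n) (hr0 : r ≠ 0) :
    (q - C (q.coeff n / r.leadingCoeff) * r).degree < n := by
  rw [degree_lt_iff_coeff_zero]
  intro m hm
  rcases hm.lt_or_eq with hm | rfl
  · simp [coeff_eq_zero_of_natDegree_lt (hq.trans_lt hm),
      coeff_eq_zero_of_natDegree_lt (hr.trans_lt hm)]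
  · simp [← hr, leadingCoeff_ne_zero.mpr hr0]

variable {ν : Measure ℂ} (hν : ∀ P : ℂ[X], MemLp (fun z => P.eval z) 2 ν)

def toL2 : ℂ[X] →ₗ[ℂ] Lp ℂ 2 ν where
  toFun P := (hν P).toLp _
  map_add' P Q := by
    rw [← MemLp.toLp_add]
    exact MemLp.toLp_congr _ _ (ae_of_all _ fun z => eval_add)
  map_smul' c P := by
    rw [RingHom.id_apply, ← MemLp.toLp_const_smul]
    exact MemLp.toLp_congr _ _ (ae_of_all _ fun z => eval_smul ..)

theorem inner_toL2 (P Q : ℂ[X]) :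
    ⟪toL2 hν P, toL2 hν Q⟫_ℂ = ∫ z, Q.eval z * conj (P.eval z) ∂ν := by
  refine integral_congr_ae ?_
  filter_upwards [(hν P).coeFn_toLp, (hν Q).coeFn_toLp] with z hP hQ
  simp [toL2, hP, hQ]

theorem norm_toL2_sq (P : ℂ[X]) : ‖toL2 hν P‖ ^ 2 = ∫ z, ‖P.eval z‖ ^ 2 ∂ν := by
  have h := inner_self_eq_norm_sq_to_K (𝕜 := ℂ) (toL2 hν P)
  rw [inner_toL2, ← RCLike.ofReal_pow] at h
  simp only [Complex.mul_conj', ← Complex.ofReal_pow, integral_complex_ofReal] at h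
  exact Complex.ofReal_injective h.symm

end Polynomial

namespace ONP

variable {ν : Measure ℂ} {p : ℕ → ℂ[X]}

theorem leadingCoeff_eq_ofReal (hp : ONP ν p) (n : ℕ) :
    (p n).leadingCoeff = ((p n).leadingCoeff.re : ℂ) :=
  Complex.ext rfl (by simp [(hp.2.1 n).2])

theorem ne_zero (hp : ONP ν p) (n : ℕ) : p n ≠ 0 := fun h => by
  simpa [h] using (hp.2.1 n).1

theorem integral_norm_sq_eq_one (hp : ONP ν p) (n : ℕ) : ∫ z, ‖(p n).eval z‖ ^ 2 ∂ν = 1 := by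
  have h := hp.2.2 n n
  simp only [Complex.mul_conj', ← Complex.ofReal_pow, integral_complex_ofReal, if_true] at h
  exact_mod_cast h

theorem inner_toL2_eq_zero_of_mem_degreeLT (hp : ONP ν p)
    (hν : ∀ P : ℂ[X], MemLp (fun z => P.eval z) 2 ν) {n : ℕ} {P : ℂ[X]}
    (hP : P ∈ degreeLT ℂ n) : ⟪toL2 hν (p n), toL2 hν P⟫_ℂ = 0 := by
  let S : Sequence ℂ := ⟨p, fun k => by rw [degree_eq_natDegree (hp.ne_zero k), hp.1 k]⟩
  rw [← S.span_degreeLT fun k _ => (leadingCoeff_ne_zero.mpr (hp.ne_zero k)).isUnit] at hP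
  suffices h : Submodule.span ℂ (p '' Set.Iio n) ≤
      LinearMap.ker ((innerₛₗ ℂ (toL2 hν (p n))).comp (toL2 hν)) from h hP
  rw [Submodule.span_le]
  rintro _ ⟨k, hk, rfl⟩
  simp [inner_toL2, hp.2.2 k n, (Set.mem_Iio.mp hk).ne]

theorem inner_toL2_eq_coeff_div (hp : ONP ν p)
    (hν : ∀ P : ℂ[X], MemLp (fun z => P.eval z) 2 ν) {n : ℕ} {q : ℂ[X]}
    (hq : q.natDegree ≤ n) :
    ⟪toL2 hν (p n), toL2 hν q⟫_ℂ = q.coeff n / (p n).leadingCoeff := by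
  set c := q.coeff n / (p n).leadingCoeff
  have hlow : q - c • p n ∈ degreeLT ℂ n := by
    rw [mem_degreeLT, smul_eq_C_mul]
    exact degree_sub_C_mul_lt hq (hp.1 n) (hp.ne_zero n)
  have hnorm : ⟪toL2 hν (p n), toL2 hν (p n)⟫_ℂ = 1 := by
    rw [inner_toL2, hp.2.2 n n, if_pos rfl]
  rw [← sub_add_cancel q (c • p n), map_add, map_smul, inner_add_right, inner_smul_right,
    hp.inner_toL2_eq_zero_of_mem_degreeLT hν hlow, hnorm, zero_add, mul_one]

theorem norm_coeff_div_leadingCoeff_sq_le (hp : ONP ν p)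
    (hν : ∀ P : ℂ[X], MemLp (fun z => P.eval z) 2 ν) {n : ℕ} {q : ℂ[X]}
    (hq : q.natDegree ≤ n) :
    ‖q.coeff n / (p n).leadingCoeff‖ ^ 2 ≤ ∫ z, ‖q.eval z‖ ^ 2 ∂ν := by
  have hunit : ‖toL2 hν (p n)‖ = 1 := by
    rw [← pow_eq_one_iff_of_nonneg (norm_nonneg _) two_ne_zero, norm_toL2_sq,
      hp.integral_norm_sq_eq_one]
  rw [← norm_toL2_sq hν, ← hp.inner_toL2_eq_coeff_div hν hq]
  gcongr
  simpa [hunit] using norm_inner_le_norm (𝕜 := ℂ) (toL2 hν (p n)) (toL2 hν q)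

theorem sq_leadingCoeff_div_le (hp : ONP ν p)
    (hν : ∀ P : ℂ[X], MemLp (fun z => P.eval z) 2 ν) {n : ℕ} {q : ℂ[X]}
    (hq : q.natDegree = n) (hq_real : q.leadingCoeff.im = 0) :
    (q.leadingCoeff.re / (p n).leadingCoeff.re) ^ 2 ≤ ∫ z, ‖q.eval z‖ ^ 2 ∂ν := by
  have h := hp.norm_coeff_div_leadingCoeff_sq_le hν hq.le
  rwa [← hq, ← leadingCoeff, hq, hp.leadingCoeff_eq_ofReal, ← Complex.re_add_im q.leadingCoeff,
    hq_real, Complex.ofReal_zero, zero_mul, add_zero, ← Complex.ofReal_div, Complex.norm_real,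
    Real.norm_eq_abs, sq_abs] at h

end ONP

theorem stmt_6_general (μ0 μ1 μ2 : Measure ℂ) [IsFiniteMeasure μ1] [IsFiniteMeasure μ2]
    (hsum : μ0 = μ1 + μ2)
    (h0c : IsCompact (msupp μ0))
    (p0 p1 : ℕ → Polynomial ℂ) (hp0 : ONP μ0 p0) (hp1 : ONP μ1 p1)
    (β : ℕ → ℝ)
    (hβ : ∀ n, ((p1 n).leadingCoeff).re / ((p0 n).leadingCoeff).re = 1 + β n) :
    ∀ n : ℕ,
      0 ≤ β n ∧
      (Real.sqrt (1 - ∫ z, ‖(p0 n).eval z‖ ^ 2 ∂μ2))⁻¹ - 1 ≤ β n ∧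
      β n ≤ Real.sqrt (1 + ∫ z, ‖(p1 n).eval z‖ ^ 2 ∂μ2) - 1 := by
  intro n
  subst hsum
  have hL2 (P : ℂ[X]) : MemLp (fun z => P.eval z) 2 (μ1 + μ2) :=
    memLp_of_isCompact_msupp h0c P.continuous 2
  set t := 1 + β n
  have ht : (p1 n).leadingCoeff.re / (p0 n).leadingCoeff.re = t := hβ n
  have ht0 : 0 < t := ht ▸ div_pos (hp1.2.1 n).1 (hp0.2.1 n).1
  have hupper : t ^ 2 ≤ 1 + ∫ z, ‖(p1 n).eval z‖ ^ 2 ∂μ2 := by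
    have h := hp0.sq_leadingCoeff_div_le hL2 (hp1.1 n) (hp1.2.1 n).2
    rwa [ht, integral_norm_sq_add_measure (hL2 _), hp1.integral_norm_sq_eq_one] at h
  have hlower : t⁻¹ ^ 2 ≤ 1 - ∫ z, ‖(p0 n).eval z‖ ^ 2 ∂μ2 := by
    have h := hp1.sq_leadingCoeff_div_le (fun P => (hL2 P).left_of_add_measure) (hp0.1 n)
      (hp0.2.1 n).2
    have hsplit := integral_norm_sq_add_measure (hL2 (p0 n))
    rw [← inv_div, ht] at h
    rw [hp0.integral_norm_sq_eq_one] at hsplit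
    linarith
  have hμ2 : 0 ≤ ∫ z, ‖(p0 n).eval z‖ ^ 2 ∂μ2 := integral_nonneg fun z => sq_nonneg _
  have hone : 1 ≤ t := (inv_le_one₀ ht0).mp <|
    (pow_le_one_iff_of_nonneg (inv_pos.mpr ht0).le two_ne_zero).mp (by linarith)
  exact ⟨by linarith, by linarith [inv_sqrt_le_of_inv_sq_le ht0 hlower],
    by linarith [Real.le_sqrt_of_sq_le hupper]⟩

/-- With `γ_n(μ₁)/γ_n(μ₀) = 1 + β_n`, one has `β_n ≥ 0` and
`(1 − ‖p_n(μ₀,·)‖²_{L²(μ₂)})^{−1/2} − 1 ≤ β_n ≤ (1 + ‖p_n(μ₁,·)‖²_{L²(μ₂)})^{1/2} − 1`. -/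
theorem stmt_6 (μ0 μ1 μ2 : Measure ℂ) [IsFiniteMeasure μ1] [IsFiniteMeasure μ2]
    (hsum : μ0 = μ1 + μ2) (hle : μ1 ≤ μ0)
    (h0c : IsCompact (msupp μ0)) (h0i : (msupp μ0).Infinite)
    (h1c : IsCompact (msupp μ1)) (h1i : (msupp μ1).Infinite)
    (p0 p1 : ℕ → Polynomial ℂ) (hp0 : ONP μ0 p0) (hp1 : ONP μ1 p1)
    (β : ℕ → ℝ)
    (hβ : ∀ n, ((p1 n).leadingCoeff).re / ((p0 n).leadingCoeff).re = 1 + β n) :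
    ∀ n : ℕ,
      0 ≤ β n ∧
      (Real.sqrt (1 - ∫ z, ‖(p0 n).eval z‖ ^ 2 ∂μ2))⁻¹ - 1 ≤ β n ∧
      β n ≤ Real.sqrt (1 + ∫ z, ‖(p1 n).eval z‖ ^ 2 ∂μ2) - 1 :=
  stmt_6_general μ0 μ1 μ2 hsum h0c p0 p1 hp0 hp1 β hβ
end
end

section
/- Let μ₀ = μ₁ + μ₂ with μ₀ ≥ μ₁ having compact infinite supports, and β_n := γ_n(μ₁)/γ_n(μ₀) − 1. Then ‖p_n(μ₀,·)‖_{L²(μ₂)} ≤ ‖p_n(μ₁,·)‖_{L²(μ₂)} for all n. -/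
/-!
If `p` is orthonormal for `μ` and `deg f ≤ n`, then `⟨f, p n⟩_μ` is the `n`-th coefficient of `f`
divided by `γ_n`, so Cauchy–Schwarz gives `∫ |f|² dμ ≥ |coeff_n f / γ_n|²`. With
`t = |γ_n(μ₀) / γ_n(μ₁)|²`, this bound for `f = p_n(μ₀)` in `L²(μ₁)` and for `f = p_n(μ₁)` in
`L²(μ₀)`, together with `μ₀ = μ₁ + μ₂`, gives
`‖p_n(μ₀)‖²_{μ₂} = 1 - ‖p_n(μ₀)‖²_{μ₁} ≤ 1 - t ≤ t⁻¹ - 1 ≤ ‖p_n(μ₁)‖²_{μ₀} - 1 = ‖p_n(μ₁)‖²_{μ₂}`.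
-/

open MeasureTheory Polynomial Filter

noncomputable section

open scoped ComplexConjugate InnerProductSpace

section CauchySchwarz

variable {α 𝕜 : Type*} [MeasurableSpace α] [RCLike 𝕜] {μ : Measure α} {f g : α → 𝕜}

lemma MeasureTheory.MemLp.integral_mul_conj_eq_inner (hf : MemLp f 2 μ) (hg : MemLp g 2 μ) :
    ∫ x, f x * conj (g x) ∂μ = ⟪hg.toLp g, hf.toLp f⟫_𝕜 := by
  rw [L2.inner_def]
  refine integral_congr_ae ?_
  filter_upwards [hf.coeFn_toLp, hg.coeFn_toLp] with x hfx hgx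
  simp [hfx, hgx]

lemma MeasureTheory.MemLp.norm_toLp_sq (hf : MemLp f 2 μ) :
    ‖hf.toLp f‖ ^ 2 = ∫ x, ‖f x‖ ^ 2 ∂μ := by
  rw [← inner_self_eq_norm_sq (𝕜 := 𝕜), ← hf.integral_mul_conj_eq_inner hf]
  simp_rw [RCLike.mul_conj, ← RCLike.ofReal_pow, integral_ofReal, RCLike.ofReal_re]

lemma norm_integral_mul_conj_sq_le (hf : MemLp f 2 μ) (hg : MemLp g 2 μ) :
    ‖∫ x, f x * conj (g x) ∂μ‖ ^ 2 ≤ (∫ x, ‖f x‖ ^ 2 ∂μ) * ∫ x, ‖g x‖ ^ 2 ∂μ := by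
  rw [hf.integral_mul_conj_eq_inner hg, ← hf.norm_toLp_sq, ← hg.norm_toLp_sq, ← mul_pow, mul_comm]
  exact pow_le_pow_left₀ (norm_nonneg _) (norm_inner_le_norm _ _) 2

end CauchySchwarz

namespace ONP

variable {μ : Measure ℂ} {p : ℕ → ℂ[X]}

lemma leadingCoeff_ne_zero (hp : ONP μ p) (n : ℕ) : (p n).leadingCoeff ≠ 0 :=
  fun h => by simpa [h] using (hp.2.1 n).1

lemma integral_norm_sq_eval (hp : ONP μ p) (n : ℕ) : ∫ z, ‖(p n).eval z‖ ^ 2 ∂μ = 1 := by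
  have h := hp.2.2 n n
  rw [if_pos rfl] at h
  simp_rw [Complex.mul_conj', ← Complex.ofReal_pow, integral_complex_ofReal] at h
  exact_mod_cast h

def toSequence (hp : ONP μ p) : Sequence ℂ where
  elems' := p
  degree_eq' n := by
    rw [degree_eq_natDegree (Polynomial.leadingCoeff_ne_zero.mp (hp.leadingCoeff_ne_zero n)),
      hp.1 n]

lemma span_image_Iio (hp : ONP μ p) (n : ℕ) : Submodule.span ℂ (p '' Set.Iio n) = degreeLT ℂ n :=
  hp.toSequence.span_degreeLT fun i _ => (hp.leadingCoeff_ne_zero i).isUnit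

lemma span_range (hp : ONP μ p) : Submodule.span ℂ (Set.range p) = ⊤ :=
  hp.toSequence.span fun i => (hp.leadingCoeff_ne_zero i).isUnit

lemma memLp_eval (hp : ONP μ p) (f : ℂ[X]) : MemLp (fun z => f.eval z) 2 μ := by
  have hf : f ∈ Submodule.span ℂ (Set.range p) := hp.span_range ▸ Submodule.mem_top
  induction hf using Submodule.span_induction with
  | mem _ hg =>
    obtain ⟨n, rfl⟩ := hg
    have hint : Integrable (fun z => ‖(p n).eval z‖ ^ 2) μ :=
      .of_integral_ne_zero (by simp [hp.integral_norm_sq_eval n])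
    exact (memLp_two_iff_integrable_sq_norm (p n).continuous.aestronglyMeasurable).mpr hint
  | zero => simp
  | add f g _ _ hf hg =>
    simp only [eval_add]
    exact hf.add hg
  | smul a f _ hf =>
    simp only [eval_smul, smul_eq_mul]
    exact hf.const_mul a

lemma coeff_self_eq_leadingCoeff (hp : ONP μ p) (n : ℕ) : (p n).coeff n = (p n).leadingCoeff := by
  rw [leadingCoeff, hp.1 n]

lemma degree_le (hp : ONP μ p) (n : ℕ) : (p n).degree ≤ n :=
  degree_le_of_natDegree_le (hp.1 n).le

lemma integral_norm_sq_eval_add_measure {ν₁ ν₂ : Measure ℂ} (hp : ONP (ν₁ + ν₂) p) (f : ℂ[X]) :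
    ∫ z, ‖f.eval z‖ ^ 2 ∂(ν₁ + ν₂) = ∫ z, ‖f.eval z‖ ^ 2 ∂ν₁ + ∫ z, ‖f.eval z‖ ^ 2 ∂ν₂ := by
  have h := integrable_add_measure.mp ((hp.memLp_eval f).integrable_norm_pow two_ne_zero)
  exact integral_add_measure h.1 h.2

lemma integrable_eval_mul_conj (hp : ONP μ p) (f g : ℂ[X]) :
    Integrable (fun z => f.eval z * conj (g.eval z)) μ :=
  (hp.memLp_eval f).integrable_mul (hp.memLp_eval g).star

def innerRight (hp : ONP μ p) (g : ℂ[X]) : ℂ[X] →ₗ[ℂ] ℂ where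
  toFun f := ∫ z, f.eval z * conj (g.eval z) ∂μ
  map_add' f h := by
    simp only [eval_add, add_mul]
    exact integral_add (hp.integrable_eval_mul_conj f g) (hp.integrable_eval_mul_conj h g)
  map_smul' a f := by
    simp only [eval_smul, smul_eq_mul, mul_assoc, RingHom.id_apply]
    exact integral_const_mul a _

lemma innerRight_apply (hp : ONP μ p) (f g : ℂ[X]) :
    hp.innerRight g f = ∫ z, f.eval z * conj (g.eval z) ∂μ := rfl

lemma innerRight_eq_zero_of_degree_lt (hp : ONP μ p) {f : ℂ[X]} {n : ℕ} (hf : f.degree < n) :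
    hp.innerRight (p n) f = 0 := by
  have hle : degreeLT ℂ n ≤ LinearMap.ker (hp.innerRight (p n)) := by
    rw [← hp.span_image_Iio, Submodule.span_le]
    rintro _ ⟨k, hk, rfl⟩
    simp [innerRight_apply, hp.2.2 k n, (Set.mem_Iio.mp hk).ne]
  exact hle (mem_degreeLT.mpr hf)

lemma innerRight_eq_coeff_div_leadingCoeff (hp : ONP μ p) {f : ℂ[X]} {n : ℕ} (hf : f.degree ≤ n) :
    hp.innerRight (p n) f = f.coeff n / (p n).leadingCoeff := by
  set c := f.coeff n / (p n).leadingCoeff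
  have hlow : (f - c • p n).degree < n := by
    rw [degree_lt_iff_coeff_zero]
    intro m hm
    rcases hm.eq_or_lt with rfl | hm
    · rw [coeff_sub, coeff_smul, hp.coeff_self_eq_leadingCoeff, smul_eq_mul,
        div_mul_cancel₀ _ (hp.leadingCoeff_ne_zero n), sub_self]
    · rw [coeff_sub, coeff_smul, coeff_eq_zero_of_degree_lt (hf.trans_lt (by exact_mod_cast hm)),
        coeff_eq_zero_of_natDegree_lt (by rw [hp.1 n]; exact hm), smul_zero, sub_zero]
  have hnorm : hp.innerRight (p n) (p n) = 1 := by simp [innerRight_apply, hp.2.2 n n]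
  calc hp.innerRight (p n) f = hp.innerRight (p n) (c • p n + (f - c • p n)) := by
        rw [add_sub_cancel]
    _ = c := by
        rw [map_add, map_smul, hnorm, hp.innerRight_eq_zero_of_degree_lt hlow, smul_eq_mul,
          mul_one, add_zero]

lemma norm_coeff_div_leadingCoeff_sq_le_s7 (hp : ONP μ p) {f : ℂ[X]} {n : ℕ} (hf : f.degree ≤ n) :
    ‖f.coeff n / (p n).leadingCoeff‖ ^ 2 ≤ ∫ z, ‖f.eval z‖ ^ 2 ∂μ := by
  have h := norm_integral_mul_conj_sq_le (hp.memLp_eval f) (hp.memLp_eval (p n))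
  rwa [← hp.innerRight_apply, hp.innerRight_eq_coeff_div_leadingCoeff hf,
    hp.integral_norm_sq_eval, mul_one] at h

end ONP

theorem stmt_7_general (μ0 μ1 μ2 : Measure ℂ) (hsum : μ0 = μ1 + μ2)
    (p0 p1 : ℕ → Polynomial ℂ) (hp0 : ONP μ0 p0) (hp1 : ONP μ1 p1) :
    ∀ n : ℕ,
      Real.sqrt (∫ z, ‖(p0 n).eval z‖ ^ 2 ∂μ2)
        ≤ Real.sqrt (∫ z, ‖(p1 n).eval z‖ ^ 2 ∂μ2) := by
  intro n
  subst hsum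
  set t := ‖(p0 n).leadingCoeff / (p1 n).leadingCoeff‖ ^ 2
  have ht : 0 < t := by
    have := div_ne_zero (hp0.leadingCoeff_ne_zero n) (hp1.leadingCoeff_ne_zero n)
    positivity
  have hp0_μ1 : t ≤ ∫ z, ‖(p0 n).eval z‖ ^ 2 ∂μ1 := by
    simpa only [hp0.coeff_self_eq_leadingCoeff]
      using hp1.norm_coeff_div_leadingCoeff_sq_le_s7 (hp0.degree_le n)
  have hp1_μ0 : t⁻¹ ≤ ∫ z, ‖(p1 n).eval z‖ ^ 2 ∂(μ1 + μ2) := by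
    simpa only [hp1.coeff_self_eq_leadingCoeff, t, ← inv_pow, ← norm_inv, inv_div]
      using hp0.norm_coeff_div_leadingCoeff_sq_le_s7 (hp1.degree_le n)
  have hsplit0 := hp0.integral_norm_sq_eval_add_measure (p0 n)
  have hsplit1 := hp0.integral_norm_sq_eval_add_measure (p1 n)
  rw [hp0.integral_norm_sq_eval] at hsplit0
  rw [hp1.integral_norm_sq_eval] at hsplit1
  have h_am_gm : 1 - t ≤ t⁻¹ - 1 := by
    nlinarith [mul_inv_cancel₀ ht.ne', sq_nonneg (t - 1), inv_pos.mpr ht]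
  apply Real.sqrt_le_sqrt
  calc ∫ z, ‖(p0 n).eval z‖ ^ 2 ∂μ2 ≤ 1 - t := by linarith
    _ ≤ t⁻¹ - 1 := h_am_gm
    _ ≤ ∫ z, ‖(p1 n).eval z‖ ^ 2 ∂μ2 := by linarith

/-- `‖p_n(μ₀,·)‖_{L²(μ₂)} ≤ ‖p_n(μ₁,·)‖_{L²(μ₂)}`. -/
theorem stmt_7 (μ0 μ1 μ2 : Measure ℂ) [IsFiniteMeasure μ1] [IsFiniteMeasure μ2]
    (hsum : μ0 = μ1 + μ2) (hle : μ1 ≤ μ0)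
    (h0c : IsCompact (msupp μ0)) (h0i : (msupp μ0).Infinite)
    (h1c : IsCompact (msupp μ1)) (h1i : (msupp μ1).Infinite)
    (p0 p1 : ℕ → Polynomial ℂ) (hp0 : ONP μ0 p0) (hp1 : ONP μ1 p1) :
    ∀ n : ℕ,
      Real.sqrt (∫ z, ‖(p0 n).eval z‖ ^ 2 ∂μ2)
        ≤ Real.sqrt (∫ z, ‖(p1 n).eval z‖ ^ 2 ∂μ2) :=
  stmt_7_general μ0 μ1 μ2 hsum p0 p1 hp0 hp1
end
end
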